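/- Let θ ∈ ℂ and let y, z : ℂ → ℂ be holomorphic with y′ = y² + z + t/2 and z′ = −2yz − θ for all t. Let D ⊆ ℂ∖{0} be open and h : D → ℂ holomorphic with h(μ) ≠ 0 and μ·h′(μ) = (θ/2)·h(μ) on D. Let ψ : D×ℂ → ℂ² be holomorphic and satisfy ∂ψ/∂μ = (μ·[[0,−1],[0,0]] + [[0, z+t],[−1/2, 0]] + (1/μ)·[[yz+θ, 2yz(y+θ/z)],[−z/2, −yz]])·ψ and ∂ψ/∂t = (μ·[[0,1],[0,0]] + [[0, −2z−t],[1/2, 0]])·ψ, where additionally z(t) ≠ 0 for all t. Then W := (1/h(μ))·[[−1, −2y],[0, 1]]·ψ satisfies the Harnad–Tracy–Widom pair on D×ℂ: ∂W/∂μ = (μ·[[0,1],[0,0]] + [[−y, −(z+2y²+t)],[1/2, y]] + (1/(2μ))·[[θ,0],[z,−θ]])·W and ∂W/∂t = −(μ·[[0,1],[0,0]] + [[−y,0],[1/2,y]])·W. -/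

import Mathlib

/-!
`W` is the gauge transform `W = g ψ` of `ψ` by `g(μ, t) = h(μ)⁻¹ [[−1, −2y], [0, 1]]`, and a gauge
transform carries `ψ' = A ψ` to `W' = B W` whenever `g' + g A = B g`. For the `μ`-equation the
Euler equation `μ h' = (θ/2) h` gives `∂_μ g = −(θ/(2μ)) g`, and for the `t`-equation
`∂_t g = h⁻¹ [[0, −2y'], [0, 0]]` with `y' = y² + z + t/2`; in both cases `g' + g A = B g` is then
a polynomial identity in the entries once `μ` and `z` are cleared from the denominators.
-/

open Matrix Complex

noncomputable section

section Gauge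

variable {𝕜 : Type*} [NontriviallyNormedField 𝕜] {m n : Type*} [Fintype n]

theorem hasDerivAt_mulVec_apply {g : 𝕜 → Matrix m n 𝕜} {g' : Matrix m n 𝕜} {v : 𝕜 → n → 𝕜}
    {v' : n → 𝕜} {x : 𝕜} (hg : ∀ i j, HasDerivAt (fun x => g x i j) (g' i j) x)
    (hv : ∀ j, HasDerivAt (fun x => v x j) (v' j) x) (i : m) :
    HasDerivAt (fun x => (g x *ᵥ v x) i) ((g' *ᵥ v x + g x *ᵥ v') i) x := by
  simp only [mulVec, dotProduct, Pi.add_apply, ← Finset.sum_add_distrib]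
  exact HasDerivAt.fun_sum fun j _ => (hg i j).mul (hv j)

theorem deriv_eq_mulVec_of_gauge {g : 𝕜 → Matrix n n 𝕜} {g' A B : Matrix n n 𝕜}
    {ψ W : 𝕜 → n → 𝕜} {x : 𝕜} (hg : ∀ i j, HasDerivAt (fun x => g x i j) (g' i j) x)
    (hψd : ∀ j, DifferentiableAt 𝕜 (fun x => ψ x j) x)
    (hψ : (fun j => deriv (fun x => ψ x j) x) = A *ᵥ ψ x)
    (hW : ∀ x, W x = g x *ᵥ ψ x) (hgauge : g' + g x * A = B * g x) :
    (fun i => deriv (fun x => W x i) x) = B *ᵥ W x := by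
  have hψ' (j : n) : HasDerivAt (fun x => ψ x j) ((A *ᵥ ψ x) j) x := by
    rw [← hψ]
    exact (hψd j).hasDerivAt
  funext i
  simp only [hW, (hasDerivAt_mulVec_apply hg hψ' i).deriv, mulVec_mulVec, ← add_mulVec, hgauge]

end Gauge

theorem smul_add_smul_mul_eq_mul_smul {R A : Type*} [CommSemiring R] [Semiring A] [Algebra R A]
    {g g' a b : A} (h : g' + g * a = b * g) (c : R) : c • g' + (c • g) * a = b * (c • g) := by
  rw [smul_mul_assoc, mul_smul_comm, ← smul_add, h]

theorem DifferentiableAt.comp_prodMk_left {𝕜 E F G : Type*} [NontriviallyNormedField 𝕜]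
    [NormedAddCommGroup E] [NormedSpace 𝕜 E] [NormedAddCommGroup F] [NormedSpace 𝕜 F]
    [NormedAddCommGroup G] [NormedSpace 𝕜 G] {f : E × F → G} {a : E} {b : F}
    (hf : DifferentiableAt 𝕜 f (a, b)) : DifferentiableAt 𝕜 (fun x => f (x, b)) a :=
  hf.comp a (differentiableAt_id.prodMk (differentiableAt_const b))

theorem DifferentiableAt.comp_prodMk_right {𝕜 E F G : Type*} [NontriviallyNormedField 𝕜]
    [NormedAddCommGroup E] [NormedSpace 𝕜 E] [NormedAddCommGroup F] [NormedSpace 𝕜 F]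
    [NormedAddCommGroup G] [NormedSpace 𝕜 G] {f : E × F → G} {a : E} {b : F}
    (hf : DifferentiableAt 𝕜 f (a, b)) : DifferentiableAt 𝕜 (fun x => f (a, x)) b :=
  hf.comp b ((differentiableAt_const a).prodMk differentiableAt_id)

theorem hasDerivAt_inv_of_mul_deriv_eq {𝕜 : Type*} [NontriviallyNormedField 𝕜] {h : 𝕜 → 𝕜}
    {μ κ : 𝕜} (hd : DifferentiableAt 𝕜 h μ) (hμ : μ ≠ 0) (hh : h μ ≠ 0)
    (he : μ * deriv h μ = κ * h μ) :
    HasDerivAt (fun m => (h m)⁻¹) (-(κ / μ) * (h μ)⁻¹) μ := by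
  refine (hd.hasDerivAt.fun_inv hh).congr_deriv ?_
  field_simp
  linear_combination -he

-- `jkt…`: coefficients of the system solved by `ψ` (a `2×2` reduction of dJKT);
-- `htw…`: coefficients of the Harnad–Tracy–Widom pair.
def jktMuMatrix (θ y z t μ : ℂ) : Matrix (Fin 2) (Fin 2) ℂ :=
  μ • !![0,-1; 0,0] + !![0, z + t; -1/2, 0] +
    (1/μ) • !![y*z + θ, 2*y*z*(y + θ/z); -z/2, -y*z]

def jktTMatrix (z t μ : ℂ) : Matrix (Fin 2) (Fin 2) ℂ :=
  μ • !![0,1; 0,0] + !![0, -2*z - t; 1/2, 0]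

def htwMuMatrix (θ y z t μ : ℂ) : Matrix (Fin 2) (Fin 2) ℂ :=
  μ • !![0,1; 0,0] + !![-y, -(z + 2*y^2 + t); 1/2, y] + (1/(2*μ)) • !![θ, 0; z, -θ]

def htwTMatrix (y μ : ℂ) : Matrix (Fin 2) (Fin 2) ℂ :=
  -(μ • !![0,1; 0,0] + !![-y, 0; 1/2, y])

def gaugeMatrix (y : ℂ) : Matrix (Fin 2) (Fin 2) ℂ := !![-1, -2*y; 0, 1]

theorem hasDerivAt_gaugeMatrix_apply {y : ℂ → ℂ} {y' t : ℂ} (hy : HasDerivAt y y' t)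
    (i j : Fin 2) :
    HasDerivAt (fun s => gaugeMatrix (y s) i j) (!![0, -2*y'; 0, 0] i j) t := by
  fin_cases i <;> fin_cases j <;> simp [gaugeMatrix]
  all_goals first
    | exact hasDerivAt_const _ _
    | exact (hy.const_mul 2).neg

theorem gauge_jktMu_htwMu (θ y z t μ : ℂ) (hz : z ≠ 0) (hμ : μ ≠ 0) :
    -(θ / 2 / μ) • gaugeMatrix y + gaugeMatrix y * jktMuMatrix θ y z t μ =
      htwMuMatrix θ y z t μ * gaugeMatrix y := by
  ext i j
  fin_cases i <;> fin_cases j <;>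
    simp [gaugeMatrix, jktMuMatrix, htwMuMatrix, Matrix.mul_apply, Fin.sum_univ_two] <;>
    field_simp <;> ring

theorem gauge_jktT_htwT (y y' z t μ : ℂ) (hy' : y' = y^2 + z + t/2) :
    !![0, -2*y'; 0, 0] + gaugeMatrix y * jktTMatrix z t μ = htwTMatrix y μ * gaugeMatrix y := by
  subst hy'
  ext i j
  fin_cases i <;> fin_cases j <;>
    simp [gaugeMatrix, jktTMatrix, htwTMatrix, Matrix.mul_apply, Fin.sum_univ_two] <;> ring

theorem stmt_17_general (θ : ℂ) (y z : ℂ → ℂ)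
    (hy : Differentiable ℂ y)
    (hy' : ∀ t : ℂ, deriv y t = (y t)^2 + z t + t/2)
    (hz0 : ∀ t : ℂ, z t ≠ 0)
    (D : Set ℂ) (hD : IsOpen D) (hD0 : ∀ μ ∈ D, μ ≠ (0:ℂ))
    (h : ℂ → ℂ) (hh : DifferentiableOn ℂ h D)
    (hh0 : ∀ μ ∈ D, h μ ≠ 0)
    (hh' : ∀ μ ∈ D, μ * deriv h μ = (θ/2) * h μ)
    (ψ : ℂ → ℂ → Fin 2 → ℂ)
    (hψdiff : ∀ i, DifferentiableOn ℂ (fun p : ℂ × ℂ => ψ p.1 p.2 i) (D ×ˢ Set.univ))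
    (hψμ : ∀ μ ∈ D, ∀ t : ℂ,
      (fun i => deriv (fun m => ψ m t i) μ) =
        (μ • (!![0,-1; 0,0] : Matrix (Fin 2) (Fin 2) ℂ) +
          !![0, z t + t; -1/2, 0] +
          (1/μ) • !![(y t)*(z t) + θ, 2*(y t)*(z t)*(y t + θ/z t);
            -(z t)/2, -(y t)*(z t)]).mulVec (ψ μ t))
    (hψt : ∀ μ ∈ D, ∀ t : ℂ,
      (fun i => deriv (fun s => ψ μ s i) t) =
        (μ • (!![0,1; 0,0] : Matrix (Fin 2) (Fin 2) ℂ) +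
          !![0, -2*z t - t; 1/2, 0]).mulVec (ψ μ t))
    (W : ℂ → ℂ → Fin 2 → ℂ)
    (hW : ∀ μ t : ℂ,
      W μ t = (h μ)⁻¹ •
        (!![-1, -2*y t; 0, 1] : Matrix (Fin 2) (Fin 2) ℂ).mulVec (ψ μ t)) :
    ∀ μ ∈ D, ∀ t : ℂ,
      ((fun i => deriv (fun m => W m t i) μ) =
        (μ • (!![0,1; 0,0] : Matrix (Fin 2) (Fin 2) ℂ) +
          !![-y t, -(z t + 2*(y t)^2 + t); 1/2, y t] +
          (1/(2*μ)) • !![θ, 0; z t, -θ]).mulVec (W μ t)) ∧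
      ((fun i => deriv (fun s => W μ s i) t) =
        (-(μ • (!![0,1; 0,0] : Matrix (Fin 2) (Fin 2) ℂ) +
          !![-y t, 0; 1/2, y t])).mulVec (W μ t)) := by
  intro μ hμ t
  have hψ (j : Fin 2) : DifferentiableAt ℂ (fun p : ℂ × ℂ => ψ p.1 p.2 j) (μ, t) :=
    (hψdiff j).differentiableAt ((hD.prod isOpen_univ).mem_nhds ⟨hμ, trivial⟩)
  have hinv := hasDerivAt_inv_of_mul_deriv_eq (hh.differentiableAt (hD.mem_nhds hμ)) (hD0 μ hμ)
    (hh0 μ hμ) (hh' μ hμ)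
  constructor
  · refine deriv_eq_mulVec_of_gauge (g := fun m => (h m)⁻¹ • gaugeMatrix (y t))
      (fun i j => ?_) (fun j => (hψ j).comp_prodMk_left) (hψμ μ hμ t)
      (fun m => by rw [hW, smul_mulVec]; rfl)
      (smul_add_smul_mul_eq_mul_smul (gauge_jktMu_htwMu θ (y t) (z t) t μ (hz0 t) (hD0 μ hμ)) _)
    simp only [Matrix.smul_apply, smul_eq_mul]
    exact (hinv.mul_const _).congr_deriv (by ring)
  · refine deriv_eq_mulVec_of_gauge (g := fun s => (h μ)⁻¹ • gaugeMatrix (y s))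
      (fun i j => ?_) (fun j => (hψ j).comp_prodMk_right) (hψt μ hμ t)
      (fun s => by rw [hW, smul_mulVec]; rfl)
      (smul_add_smul_mul_eq_mul_smul (gauge_jktT_htwT (y t) (deriv y t) (z t) t μ (hy' t)) _)
    simp only [Matrix.smul_apply, smul_eq_mul]
    exact (hasDerivAt_gaugeMatrix_apply (hy t).hasDerivAt i j).const_mul _

/-- If `ψ` solves the `2×2` reduction of `dJKT₂²` on `D×ℂ` and
`μ h'(μ) = (θ/2) h(μ)` with `h` nowhere zero on `D`, then
`W := (1/h)·[[−1,−2y],[0,1]]·ψ` solves the Harnad–Tracy–Widom pair with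
parameter `θ` on `D×ℂ`. -/
theorem stmt_17 (θ : ℂ) (y z : ℂ → ℂ)
    (hy : Differentiable ℂ y) (hz : Differentiable ℂ z)
    (hy' : ∀ t : ℂ, deriv y t = (y t)^2 + z t + t/2)
    (hz' : ∀ t : ℂ, deriv z t = -2*(y t)*(z t) - θ)
    (hz0 : ∀ t : ℂ, z t ≠ 0)
    (D : Set ℂ) (hD : IsOpen D) (hD0 : ∀ μ ∈ D, μ ≠ (0:ℂ))
    (h : ℂ → ℂ) (hh : DifferentiableOn ℂ h D)
    (hh0 : ∀ μ ∈ D, h μ ≠ 0)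
    (hh' : ∀ μ ∈ D, μ * deriv h μ = (θ/2) * h μ)
    (ψ : ℂ → ℂ → Fin 2 → ℂ)
    (hψdiff : ∀ i, DifferentiableOn ℂ (fun p : ℂ × ℂ => ψ p.1 p.2 i) (D ×ˢ Set.univ))
    (hψμ : ∀ μ ∈ D, ∀ t : ℂ,
      (fun i => deriv (fun m => ψ m t i) μ) =
        (μ • (!![0,-1; 0,0] : Matrix (Fin 2) (Fin 2) ℂ) +
          !![0, z t + t; -1/2, 0] +
          (1/μ) • !![(y t)*(z t) + θ, 2*(y t)*(z t)*(y t + θ/z t);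
            -(z t)/2, -(y t)*(z t)]).mulVec (ψ μ t))
    (hψt : ∀ μ ∈ D, ∀ t : ℂ,
      (fun i => deriv (fun s => ψ μ s i) t) =
        (μ • (!![0,1; 0,0] : Matrix (Fin 2) (Fin 2) ℂ) +
          !![0, -2*z t - t; 1/2, 0]).mulVec (ψ μ t))
    (W : ℂ → ℂ → Fin 2 → ℂ)
    (hW : ∀ μ t : ℂ,
      W μ t = (h μ)⁻¹ •
        (!![-1, -2*y t; 0, 1] : Matrix (Fin 2) (Fin 2) ℂ).mulVec (ψ μ t)) :
    ∀ μ ∈ D, ∀ t : ℂ,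
      ((fun i => deriv (fun m => W m t i) μ) =
        (μ • (!![0,1; 0,0] : Matrix (Fin 2) (Fin 2) ℂ) +
          !![-y t, -(z t + 2*(y t)^2 + t); 1/2, y t] +
          (1/(2*μ)) • !![θ, 0; z t, -θ]).mulVec (W μ t)) ∧
      ((fun i => deriv (fun s => W μ s i) t) =
        (-(μ • (!![0,1; 0,0] : Matrix (Fin 2) (Fin 2) ℂ) +
          !![-y t, 0; 1/2, y t])).mulVec (W μ t)) :=
  stmt_17_general θ y z hy hy' hz0 D hD hD0 h hh hh0 hh' ψ hψdiff hψμ hψt W hW
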